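/- arXiv:0801.3523 — 5 statements merged into one kernel-verified Lean document; each statement's English description precedes it below -/
import Mathlib

section
/- There exist constants c, C > 0 such that for all 0 ≤ r ≤ s: c · ((s−r)/(1+s−r)) · (s/(1+s)) · e^s ≤ cosh s − cosh r ≤ C · ((s−r)/(1+s−r)) · (s/(1+s)) · e^s. -/
/-!
Write `s = v + u`, `r = v - u` with `0 ≤ u ≤ v`. Then `cosh s - cosh r = 2 sinh u sinh v`, and
for `w ≥ 0` the quantity `2 sinh w = eʷ - e⁻ʷ` lies between `w/(1+w) · eʷ` and `3 w/(1+w) · eʷ`.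
Since `s - r = 2u` and `v ≤ s ≤ 2v`, the saturating factors `x/(1+x)` at `u, v` and at `s - r, s`
agree up to a factor `2`.
-/

open Real

theorem cosh_add_sub_cosh_sub (u v : ℝ) : cosh (v + u) - cosh (v - u) = 2 * sinh u * sinh v := by
  rw [cosh_add, cosh_sub]; ring

theorem div_one_add_mul_exp_le_two_mul_sinh {u : ℝ} (hu : 0 ≤ u) :
    u / (1 + u) * exp u ≤ 2 * sinh u := by
  have hexp : 1 + u ≤ exp u := by linarith [add_one_le_exp u]
  have hinv : exp (-u) * exp u = 1 := by rw [← exp_add, neg_add_cancel, exp_zero]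
  rw [sinh_eq, div_mul_eq_mul_div, div_le_iff₀ (by positivity)]
  nlinarith [exp_pos (-u), exp_pos u]

theorem two_mul_sinh_le_three_mul_div_one_add_mul_exp {u : ℝ} (hu : 0 ≤ u) :
    2 * sinh u ≤ 3 * (u / (1 + u)) * exp u := by
  have hsplit : exp (-u) = exp (-(2 * u)) * exp u := by rw [← exp_add]; ring_nf
  have hsmall : exp u - exp (-u) ≤ 2 * u * exp u := by
    rw [hsplit]; nlinarith [add_one_le_exp (-(2 * u)), exp_pos u]
  -- `(1 + u) (eᵘ - e⁻ᵘ) ≤ 2u eᵘ + u eᵘ`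
  rw [sinh_eq, mul_div_cancel₀ _ two_ne_zero, mul_div_assoc', div_mul_eq_mul_div,
    le_div_iff₀ (by positivity)]
  nlinarith [exp_pos (-u), exp_pos u]

theorem div_one_add_le_two_mul {a b : ℝ} (hab : a ≤ b) (hb : b ≤ 2 * a) :
    b / (1 + b) ≤ 2 * (a / (1 + a)) := by
  rw [mul_div_assoc', div_le_div_iff₀ (by linarith) (by linarith)]
  nlinarith

theorem div_one_add_le_div_one_add {a b : ℝ} (ha : 0 ≤ a) (hab : a ≤ b) :
    a / (1 + a) ≤ b / (1 + b) := by
  rw [div_le_div_iff₀ (by linarith) (by linarith)]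
  linarith

theorem cosh_add_sub_cosh_sub_ge {u v : ℝ} (hu : 0 ≤ u) (huv : u ≤ v) :
    1 / 8 * (2 * u / (1 + 2 * u)) * ((v + u) / (1 + (v + u))) * exp (v + u) ≤
      cosh (v + u) - cosh (v - u) := by
  have hv : 0 ≤ v := hu.trans huv
  have hφu := div_one_add_le_two_mul (by linarith) (le_refl (2 * u))
  have hφv := div_one_add_le_two_mul (by linarith) (by linarith : v + u ≤ 2 * v)
  rw [cosh_add_sub_cosh_sub, exp_add]
  calc 1 / 8 * (2 * u / (1 + 2 * u)) * ((v + u) / (1 + (v + u))) * (exp v * exp u)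
      ≤ 1 / 8 * (2 * (u / (1 + u))) * (2 * (v / (1 + v))) * (exp v * exp u) := by
        gcongr
    _ = 1 / 2 * (u / (1 + u) * exp u) * (v / (1 + v) * exp v) := by ring
    _ ≤ 1 / 2 * (2 * sinh u) * (2 * sinh v) := by
        gcongr 1 / 2 * ?_ * ?_
        · exact div_one_add_mul_exp_le_two_mul_sinh hu
        · exact div_one_add_mul_exp_le_two_mul_sinh hv
    _ = 2 * sinh u * sinh v := by ring

theorem cosh_add_sub_cosh_sub_le {u v : ℝ} (hu : 0 ≤ u) (huv : u ≤ v) :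
    cosh (v + u) - cosh (v - u) ≤
      9 / 2 * (2 * u / (1 + 2 * u)) * ((v + u) / (1 + (v + u))) * exp (v + u) := by
  have hv : 0 ≤ v := hu.trans huv
  rw [cosh_add_sub_cosh_sub, exp_add]
  calc 2 * sinh u * sinh v = 1 / 2 * (2 * sinh u) * (2 * sinh v) := by ring
    _ ≤ 1 / 2 * (3 * (u / (1 + u)) * exp u) * (3 * (v / (1 + v)) * exp v) := by
        gcongr 1 / 2 * ?_ * ?_
        · exact two_mul_sinh_le_three_mul_div_one_add_mul_exp hu
        · exact two_mul_sinh_le_three_mul_div_one_add_mul_exp hv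
    _ ≤ 1 / 2 * (3 * (2 * u / (1 + 2 * u)) * exp u) * (3 * ((v + u) / (1 + (v + u))) * exp v) := by
        gcongr 1 / 2 * (3 * ?_ * _) * (3 * ?_ * _)
        · exact div_one_add_le_div_one_add hu (by linarith)
        · exact div_one_add_le_div_one_add hv (by linarith)
    _ = 9 / 2 * (2 * u / (1 + 2 * u)) * ((v + u) / (1 + (v + u))) * (exp v * exp u) := by ring

theorem cosh_sub_cosh_comparable :
    ∃ c C : ℝ, 0 < c ∧ 0 < C ∧ ∀ r s : ℝ, 0 ≤ r → r ≤ s →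
      c * ((s - r) / (1 + s - r)) * (s / (1 + s)) * Real.exp s ≤
        Real.cosh s - Real.cosh r ∧
      Real.cosh s - Real.cosh r ≤
        C * ((s - r) / (1 + s - r)) * (s / (1 + s)) * Real.exp s := by
  refine ⟨1 / 8, 9 / 2, by norm_num, by norm_num, fun r s hr hrs => ?_⟩
  obtain ⟨u, v, rfl, rfl⟩ : ∃ u v : ℝ, s = v + u ∧ r = v - u :=
    ⟨(s - r) / 2, (s + r) / 2, by ring, by ring⟩
  have hu : 0 ≤ u := by linarith
  have huv : u ≤ v := by linarith
  rw [show v + u - (v - u) = 2 * u by ring, show 1 + (v + u) - (v - u) = 1 + 2 * u by ring]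
  exact ⟨cosh_add_sub_cosh_sub_ge hu huv, cosh_add_sub_cosh_sub_le hu huv⟩
end

section
/- There exist constants c, C > 0 such that for all s > 0: c·s·e^{−s} ≤ (s·coth s − 1)/sinh s ≤ C·s·e^{−s}. -/
/-!
Put `F s = (s coth s - 1) / sinh s = (s cosh s - sinh s) / sinh s ^ 2`. Then
`s / (3 cosh s) ≤ F s ≤ s / cosh s`, and `exp s / 2 ≤ cosh s ≤ exp s` for `s ≥ 0`.
The upper bound on `F` reduces to `s ≤ sinh s * cosh s`. The lower bound reduces, after
doubling the argument, to `3 sinh t ≤ 2 t + t cosh t`, which holds term by term in the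
power series because `3 ≤ 2 n + 1` for `n ≥ 1`.
-/

open Real

namespace Real

theorem three_mul_sinh_le {t : ℝ} (ht : 0 ≤ t) : 3 * sinh t ≤ 2 * t + t * cosh t := by
  have hsinh := (hasSum_sinh t).mul_left 3
  have hrhs := (hasSum_ite_eq 0 (2 * t)).add ((hasSum_cosh t).mul_left t)
  refine hasSum_le (fun n => ?_) hsinh hrhs
  rcases n with _ | n
  · norm_num
    linarith
  · have hterm : 0 ≤ t * (t ^ (2 * (n + 1)) / (2 * (n + 1)).factorial) := by positivity
    have hsucc : t ^ (2 * (n + 1) + 1) / ((2 * (n + 1) + 1).factorial : ℝ)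
        = t * (t ^ (2 * (n + 1)) / (2 * (n + 1)).factorial) / (2 * n + 3) := by
      rw [Nat.factorial_succ, pow_succ]
      push_cast
      field_simp
      ring
    rw [hsucc, if_neg n.succ_ne_zero, zero_add, mul_div_assoc', div_le_iff₀ (by positivity)]
    nlinarith [n.cast_nonneg (α := ℝ)]

theorem three_mul_sinh_mul_cosh_le {x : ℝ} (hx : 0 ≤ x) :
    3 * (sinh x * cosh x) ≤ x * (3 + 2 * sinh x ^ 2) := by
  have h := three_mul_sinh_le (mul_nonneg zero_le_two hx)
  rw [sinh_two_mul, cosh_two_mul, cosh_sq] at h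
  linarith

theorem cosh_le_exp_of_nonneg {x : ℝ} (hx : 0 ≤ x) : cosh x ≤ exp x := by
  rw [cosh_eq]
  linarith [exp_le_exp.mpr (neg_le_self hx)]

theorem exp_le_two_mul_cosh (x : ℝ) : exp x ≤ 2 * cosh x := by
  rw [cosh_eq]
  linarith [exp_pos (-x)]

end Real

section CothTerm

variable {s : ℝ}

theorem mul_coth_sub_one_div_sinh_eq (hs : sinh s ≠ 0) :
    (s * (cosh s / sinh s) - 1) / sinh s = (s * cosh s - sinh s) / sinh s ^ 2 := by
  field_simp

theorem mul_coth_sub_one_div_sinh_le (hs : 0 < s) :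
    (s * (cosh s / sinh s) - 1) / sinh s ≤ s / cosh s := by
  have hsinh : 0 < sinh s := sinh_pos_iff.mpr hs
  rw [mul_coth_sub_one_div_sinh_eq hsinh.ne', div_le_div_iff₀ (by positivity) (cosh_pos s)]
  nlinarith [cosh_sq s, self_le_sinh_iff.mpr hs.le, one_le_cosh s]

theorem le_mul_coth_sub_one_div_sinh (hs : 0 < s) :
    s / (3 * cosh s) ≤ (s * (cosh s / sinh s) - 1) / sinh s := by
  have hsinh : 0 < sinh s := sinh_pos_iff.mpr hs
  rw [mul_coth_sub_one_div_sinh_eq hsinh.ne', div_le_div_iff₀ (by positivity) (by positivity)]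
  nlinarith [cosh_sq s, three_mul_sinh_mul_cosh_le hs.le]

end CothTerm

theorem coth_estimate :
    ∃ c C : ℝ, 0 < c ∧ 0 < C ∧ ∀ s : ℝ, 0 < s →
      c * s * Real.exp (-s) ≤ (s * (Real.cosh s / Real.sinh s) - 1) / Real.sinh s ∧
      (s * (Real.cosh s / Real.sinh s) - 1) / Real.sinh s ≤ C * s * Real.exp (-s) := by
  refine ⟨1 / 3, 2, by norm_num, by norm_num, fun s hs => ⟨?_, ?_⟩⟩
  · calc 1 / 3 * s * exp (-s) = s / (3 * exp s) := by rw [exp_neg]; field_simp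
      _ ≤ s / (3 * cosh s) := by gcongr; exact cosh_le_exp_of_nonneg hs.le
      _ ≤ _ := le_mul_coth_sub_one_div_sinh hs
  · calc _ ≤ s / cosh s := mul_coth_sub_one_div_sinh_le hs
      _ ≤ s / (exp s / 2) := by gcongr; linarith [exp_le_two_mul_cosh s]
      _ = 2 * s * exp (-s) := by rw [exp_neg]; field_simp
end

section
/- Define φ_ℓ(r) recursively on (0,∞) by φ_0(r) = r² and φ_{ℓ+1}(r) = (1/sinh r) · φ_ℓ'(r). Then for each ℓ ≥ 1 there exists C > 0 such that |φ_ℓ(r)| ≤ C (1+r) e^{−ℓ r} for all r > 0. -/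
/-- φ_0(r) = r², φ_{ℓ+1}(r) = φ_ℓ'(r) / sinh r. -/
noncomputable def phi : ℕ → ℝ → ℝ
  | 0 => fun r => r ^ 2
  | (ℓ + 1) => fun r => deriv (phi ℓ) r / Real.sinh r

/-!
Near `0`, `φ_ℓ` is the restriction of an even real-analytic function: if `ψ` is even then `ψ'` is
odd, so `ψ'(x) / sinh x = (ψ'(x) / x) / (sinh x / x)` is a quotient of the slopes at `0` of two
analytic functions, the denominator never vanishing. Hence `φ_ℓ` is bounded on `(0, 1]`.

Away from `0`, induction gives `φ_{j+1} = N / sinh^{2j+1}` where `N` is a sum of terms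
`(a r + b) e^{k r}` with `k ≤ j`: differentiating and multiplying by `sinh` or `cosh` raises the
top exponent by one per step. So `|N r| ≤ C (1 + r) e^{j r}`, while `sinh r ≥ e^r / 3` for
`r ≥ 1`, which gives the decay `e^{-(j+1) r}`.
-/

open Real Filter Set

section

variable {𝕜 E : Type*} [NontriviallyNormedField 𝕜] [NormedAddCommGroup E] [NormedSpace 𝕜 E]

theorem AnalyticOnNhd.dslope {f : 𝕜 → E} {s : Set 𝕜} (hf : AnalyticOnNhd 𝕜 f s) (a : 𝕜) :
    AnalyticOnNhd 𝕜 (dslope f a) s := by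
  intro x hx
  rcases eq_or_ne x a with rfl | hxa
  · obtain ⟨p, hp⟩ := hf x hx
    exact ⟨p.fslope, hp.has_fpower_series_dslope_fslope⟩
  · have h_slope : AnalyticAt 𝕜 (fun y => (y - a)⁻¹ • (f y - f a)) x :=
      ((analyticAt_id.sub analyticAt_const).inv (sub_ne_zero.mpr hxa)).smul
        ((hf x hx).sub analyticAt_const)
    refine h_slope.congr ?_
    filter_upwards [eventually_ne_nhds hxa] with y hy
    rw [dslope_of_ne _ hy, slope, vsub_eq_sub]

theorem Function.Even.deriv {f : 𝕜 → E} (hf : f.Even) : (deriv f).Odd := fun x => by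
  simpa [hf.eq] using deriv_comp_neg (f := f) (x := -x)

theorem Function.Odd.dslope_zero {f : 𝕜 → E} (hf : f.Odd) : (dslope f 0).Even := fun x => by
  rcases eq_or_ne x 0 with rfl | hx
  · rw [neg_zero]
  · have h0 : -f 0 = f 0 := by simpa using (hf 0).symm
    rw [dslope_of_ne _ hx, dslope_of_ne _ (neg_ne_zero.mpr hx), slope_def_module,
      slope_def_module, hf.eq, sub_zero, sub_zero, inv_neg, neg_smul, ← smul_neg]
    congr 1
    rw [neg_sub, sub_neg_eq_add, sub_eq_add_neg, h0, add_comm]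

end

theorem dslope_sinh_zero_ne_zero (x : ℝ) : dslope sinh 0 x ≠ 0 := by
  rcases eq_or_ne x 0 with rfl | hx
  · simp
  · rw [dslope_of_ne _ hx, slope_def_field, sinh_zero, sub_zero, sub_zero]
    rcases hx.lt_or_gt with h | h
    · exact (div_pos_of_neg_of_neg (sinh_neg_iff.mpr h) h).ne'
    · exact (div_pos (sinh_pos_iff.mpr h) h).ne'

theorem exists_analyticOnNhd_even_eq_deriv_div_sinh {ψ : ℝ → ℝ} (hψ : AnalyticOnNhd ℝ ψ univ)
    (hψ_even : ψ.Even) : ∃ χ : ℝ → ℝ, AnalyticOnNhd ℝ χ univ ∧ χ.Even ∧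
      ∀ x ≠ 0, χ x = deriv ψ x / sinh x := by
  have h_odd := hψ_even.deriv
  refine ⟨fun x => dslope (deriv ψ) 0 x / dslope sinh 0 x,
    fun x _ => ?_, fun x => ?_, fun x hx => ?_⟩
  · exact (hψ.deriv.dslope 0 x (mem_univ x)).div (analyticOnNhd_sinh.dslope 0 x (mem_univ x))
      (dslope_sinh_zero_ne_zero x)
  · simp only [h_odd.dslope_zero.eq, Function.Odd.dslope_zero (f := sinh) sinh_neg x]
  · simp only [dslope_of_ne _ hx, slope_def_field, h_odd.map_zero, sinh_zero, sub_zero]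
    exact div_div_div_cancel_right₀ hx _ _

theorem exists_analyticOnNhd_even_eq_phi (ℓ : ℕ) : ∃ ψ : ℝ → ℝ, AnalyticOnNhd ℝ ψ univ ∧
    ψ.Even ∧ ∀ x ≠ 0, ψ x = phi ℓ x := by
  induction ℓ with
  | zero => exact ⟨fun x => x ^ 2, fun x _ => analyticAt_id.pow 2, fun x => by simp, fun _ _ => rfl⟩
  | succ ℓ ih =>
    obtain ⟨ψ, hψ, hψ_even, hψ_eq⟩ := ih
    obtain ⟨χ, hχ, hχ_even, hχ_eq⟩ := exists_analyticOnNhd_even_eq_deriv_div_sinh hψ hψ_even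
    refine ⟨χ, hχ, hχ_even, fun x hx => ?_⟩
    have h_near : ψ =ᶠ[nhds x] phi ℓ := by
      filter_upwards [eventually_ne_nhds hx] with y hy using hψ_eq y hy
    rw [hχ_eq x hx, h_near.deriv_eq]
    rfl

theorem exists_abs_phi_le_of_mem_Ioc (ℓ : ℕ) (R : ℝ) :
    ∃ C, 0 ≤ C ∧ ∀ r ∈ Ioc 0 R, |phi ℓ r| ≤ C := by
  obtain ⟨ψ, hψ, -, hψ_eq⟩ := exists_analyticOnNhd_even_eq_phi ℓ
  obtain ⟨C, hC⟩ := (isCompact_Icc (a := 0) (b := R)).exists_bound_of_continuousOn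
    (hψ.continuousOn.mono (subset_univ _))
  refine ⟨max C 0, le_max_right _ _, fun r hr => ?_⟩
  rw [← hψ_eq r hr.1.ne']
  exact (hC r (Ioc_subset_Icc_self hr)).trans (le_max_left _ _)

inductive IsExpPoly (K : ℝ) : (ℝ → ℝ) → Prop
  | basic (a b k : ℝ) (hk : k ≤ K) : IsExpPoly K fun r => (a * r + b) * exp (k * r)
  | add {f g : ℝ → ℝ} : IsExpPoly K f → IsExpPoly K g → IsExpPoly K fun r => f r + g r

namespace IsExpPoly

variable {K : ℝ} {f : ℝ → ℝ}

theorem congr {g : ℝ → ℝ} (hf : IsExpPoly K f) (hfg : ∀ r, f r = g r) : IsExpPoly K g :=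
  funext hfg ▸ hf

theorem mono {K' : ℝ} (hf : IsExpPoly K f) (hK : K ≤ K') : IsExpPoly K' f := by
  induction hf with
  | basic a b k hk => exact basic a b k (hk.trans hK)
  | add _ _ ihf ihg => exact ihf.add ihg

theorem const_mul (c : ℝ) (hf : IsExpPoly K f) : IsExpPoly K fun r => c * f r := by
  induction hf with
  | basic a b k hk => exact (basic (c * a) (c * b) k hk).congr fun r => by ring
  | add _ _ ihf ihg => exact (ihf.add ihg).congr fun r => by ring

theorem mul_exp (c : ℝ) (hf : IsExpPoly K f) : IsExpPoly (K + c) fun r => f r * exp (c * r) := by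
  induction hf with
  | basic a b k hk =>
    refine (basic a b (k + c) (by linarith)).congr fun r => ?_
    rw [add_mul k c, exp_add, mul_assoc]
  | add _ _ ihf ihg => exact (ihf.add ihg).congr fun r => by ring

theorem mul_sinh (hf : IsExpPoly K f) : IsExpPoly (K + 1) fun r => f r * sinh r := by
  refine (((hf.mul_exp 1).const_mul (1 / 2)).add
    (((hf.mul_exp (-1)).mono (by linarith : K + -1 ≤ K + 1)).const_mul (-1 / 2))).congr fun r => ?_
  rw [sinh_eq]
  simp only [one_mul, neg_one_mul]
  ring

theorem mul_cosh (hf : IsExpPoly K f) : IsExpPoly (K + 1) fun r => f r * cosh r := by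
  refine (((hf.mul_exp 1).const_mul (1 / 2)).add
    (((hf.mul_exp (-1)).mono (by linarith : K + -1 ≤ K + 1)).const_mul (1 / 2))).congr fun r => ?_
  rw [cosh_eq]
  simp only [one_mul, neg_one_mul]
  ring

theorem exists_hasDerivAt (hf : IsExpPoly K f) :
    ∃ f' : ℝ → ℝ, IsExpPoly K f' ∧ ∀ r, HasDerivAt f (f' r) r := by
  induction hf with
  | basic a b k hk =>
    refine ⟨fun r => (a * k * r + (a + b * k)) * exp (k * r), basic _ _ k hk, fun r => ?_⟩
    have h_lin : HasDerivAt (fun r => a * r + b) a r := by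
      simpa using ((hasDerivAt_id r).const_mul a).add_const b
    have h_exp : HasDerivAt (fun r => exp (k * r)) (exp (k * r) * k) r := by
      simpa using ((hasDerivAt_id r).const_mul k).exp
    exact (h_lin.mul h_exp).congr_deriv (by ring)
  | add _ _ ihf ihg =>
    obtain ⟨f', hf', hf'_deriv⟩ := ihf
    obtain ⟨g', hg', hg'_deriv⟩ := ihg
    exact ⟨fun r => f' r + g' r, hf'.add hg', fun r => (hf'_deriv r).add (hg'_deriv r)⟩

theorem exists_abs_le (hf : IsExpPoly K f) :
    ∃ C, 0 < C ∧ ∀ r, 0 ≤ r → |f r| ≤ C * (1 + r) * exp (K * r) := by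
  induction hf with
  | basic a b k hk =>
    refine ⟨|a| + |b| + 1, by positivity, fun r hr => ?_⟩
    have h_lin : |a * r + b| ≤ (|a| + |b| + 1) * (1 + r) :=
      calc |a * r + b| ≤ |a| * r + |b| := by
            simpa [abs_mul, abs_of_nonneg hr] using abs_add_le (a * r) b
        _ ≤ (|a| + |b| + 1) * (1 + r) := by nlinarith [abs_nonneg a, abs_nonneg b]
    rw [abs_mul, abs_exp]
    gcongr
  | add _ _ ihf ihg =>
    obtain ⟨C₁, hC₁, hf⟩ := ihf
    obtain ⟨C₂, hC₂, hg⟩ := ihg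
    refine ⟨C₁ + C₂, by positivity, fun r hr => ?_⟩
    calc _ ≤ _ := abs_add_le _ _
      _ ≤ C₁ * (1 + r) * exp (K * r) + C₂ * (1 + r) * exp (K * r) := add_le_add (hf r hr) (hg r hr)
      _ = _ := by ring

end IsExpPoly

theorem deriv_div_sinh_pow_div_sinh {N : ℝ → ℝ} {N' r : ℝ} (m : ℕ) (hN : HasDerivAt N N' r)
    (hr : r ≠ 0) : deriv (fun y => N y / sinh y ^ m) r / sinh r =
      (N' * sinh r + -(m : ℝ) * (N r * cosh r)) / sinh r ^ (m + 2) := by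
  have hs : sinh r ≠ 0 := sinh_ne_zero.mpr hr
  have h_pow : HasDerivAt (fun y => sinh y ^ m) (m * sinh r ^ (m - 1) * cosh r) r :=
    (hasDerivAt_sinh r).pow m
  rw [(hN.fun_div h_pow (pow_ne_zero m hs)).deriv]
  rcases m with _ | m
  · field_simp; ring
  · simp only [Nat.add_sub_cancel]
    field_simp
    ring

theorem exists_isExpPoly_phi_succ_eq (ℓ : ℕ) : ∃ N : ℝ → ℝ, IsExpPoly ℓ N ∧
    ∀ r ≠ 0, phi (ℓ + 1) r = N r / sinh r ^ (2 * ℓ + 1) := by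
  induction ℓ with
  | zero =>
    refine ⟨fun r => (2 * r + 0) * exp (0 * r), .basic 2 0 0 (Nat.cast_nonneg 0), fun r hr => ?_⟩
    show deriv (fun r => r ^ 2) r / sinh r = _
    simp
  | succ ℓ ih =>
    obtain ⟨N, hN, hN_eq⟩ := ih
    obtain ⟨N', hN', hN'_deriv⟩ := hN.exists_hasDerivAt
    refine ⟨fun r => N' r * sinh r + -((2 * ℓ + 1 : ℕ) : ℝ) * (N r * cosh r),
      by exact_mod_cast hN'.mul_sinh.add (hN.mul_cosh.const_mul _), fun r hr => ?_⟩
    have h_near : phi (ℓ + 1) =ᶠ[nhds r] fun y => N y / sinh y ^ (2 * ℓ + 1) := by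
      filter_upwards [eventually_ne_nhds hr] with y hy using hN_eq y hy
    show deriv (phi (ℓ + 1)) r / sinh r = _
    rw [h_near.deriv_eq, deriv_div_sinh_pow_div_sinh _ (hN'_deriv r) hr]
    rfl

theorem exp_div_three_le_sinh {r : ℝ} (hr : 1 ≤ r) : exp r / 3 ≤ sinh r := by
  have h_three : 3 ≤ exp r * exp r := by
    rw [← exp_add]
    linarith [add_one_le_exp (r + r)]
  have h_inv : exp r * exp (-r) = 1 := by rw [← exp_add, add_neg_cancel, exp_zero]
  rw [sinh_eq]
  nlinarith [exp_pos (-r)]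

theorem IsExpPoly.exists_abs_div_sinh_pow_le {K : ℝ} {N : ℝ → ℝ} (hN : IsExpPoly K N) (m : ℕ) :
    ∃ C, 0 < C ∧ ∀ r, 1 ≤ r → |N r / sinh r ^ m| ≤ C * (1 + r) * exp ((K - m) * r) := by
  obtain ⟨C, hC, hN_le⟩ := hN.exists_abs_le
  refine ⟨C * 3 ^ m, by positivity, fun r hr => ?_⟩
  have h_sinh : (exp r / 3) ^ m ≤ sinh r ^ m := by
    gcongr
    exact exp_div_three_le_sinh hr
  rw [abs_div, abs_of_nonneg (by positivity : 0 ≤ sinh r ^ m)]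
  calc |N r| / sinh r ^ m ≤ C * (1 + r) * exp (K * r) / (exp r / 3) ^ m := by
        gcongr
        exact hN_le r (by linarith)
    _ = C * 3 ^ m * (1 + r) * exp ((K - m) * r) := by
        rw [div_pow, ← exp_nat_mul, sub_mul, exp_sub]
        field_simp

theorem le_mul_one_add_mul_exp_neg_mul {a C r : ℝ} (ha : 0 ≤ a) (hC : 0 ≤ C) (hr₀ : 0 ≤ r)
    (hr₁ : r ≤ 1) : C ≤ C * exp a * (1 + r) * exp (-a * r) := by
  have h_exp : 1 ≤ exp a * exp (-a * r) := by
    rw [← exp_add]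
    exact one_le_exp (by nlinarith)
  calc C = C * 1 * 1 := by ring
    _ ≤ C * (exp a * exp (-a * r)) * (1 + r) := by gcongr; linarith
    _ = C * exp a * (1 + r) * exp (-a * r) := by ring

theorem phi_estimate (ℓ : ℕ) (hℓ : 1 ≤ ℓ) :
    ∃ C : ℝ, 0 < C ∧ ∀ r : ℝ, 0 < r →
      |phi ℓ r| ≤ C * (1 + r) * Real.exp (-(ℓ : ℝ) * r) := by
  obtain ⟨j, rfl⟩ := Nat.exists_eq_add_of_le' hℓ
  obtain ⟨C₀, hC₀, h_small⟩ := exists_abs_phi_le_of_mem_Ioc (j + 1) 1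
  obtain ⟨N, hN, hN_eq⟩ := exists_isExpPoly_phi_succ_eq j
  obtain ⟨C₁, hC₁, h_large⟩ := hN.exists_abs_div_sinh_pow_le (2 * j + 1)
  have h_exponent : (j : ℝ) - (2 * j + 1 : ℕ) = -((j + 1 : ℕ) : ℝ) := by push_cast; ring
  refine ⟨C₀ * exp (j + 1 : ℕ) + C₁, by positivity, fun r hr => ?_⟩
  rcases le_or_gt r 1 with hr₁ | hr₁
  · calc |phi (j + 1) r| ≤ C₀ := h_small r ⟨hr, hr₁⟩
      _ ≤ C₀ * exp (j + 1 : ℕ) * (1 + r) * exp (-((j + 1 : ℕ) : ℝ) * r) :=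
        le_mul_one_add_mul_exp_neg_mul (by positivity) hC₀ hr.le hr₁
      _ ≤ _ := by gcongr; exact le_add_of_nonneg_right hC₁.le
  · calc |phi (j + 1) r| = |N r / sinh r ^ (2 * j + 1)| := by rw [hN_eq r hr.ne']
      _ ≤ C₁ * (1 + r) * exp (-((j + 1 : ℕ) : ℝ) * r) := h_exponent ▸ h_large r hr₁.le
      _ ≤ _ := by gcongr; exact le_add_of_nonneg_left (by positivity)
end

section
/- Let m ≥ 1. There exists C > 0 (depending only on m) such that for all t > 0 and r ≥ 0, ∫_r^∞ [(1+s)/t + ((1+s)/t)^m] e^{−(m−1/2)s} · √(1+s−r)/√(s−r) ds ≤ C · [(1+r)/t + ((1+r)/t)^m] e^{−(m−1/2)r}. -/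
open MeasureTheory

private noncomputable def Gker (m : ℕ) (u : ℝ) : ℝ :=
  (1 + u) ^ (m + 1) * Real.exp (-(1 / 2) * u) / Real.sqrt u

private lemma Gker_nonneg (m : ℕ) {u : ℝ} (hu : 0 < u) : 0 ≤ Gker m u := by
  unfold Gker
  have h1 : (0:ℝ) ≤ 1 + u := by linarith
  positivity

private lemma Gker_integrable (m : ℕ) :
    IntegrableOn (Gker m) (Set.Ioi 0) := by
  have h1 : IntegrableOn (fun x : ℝ => x ^ (-(1/2) : ℝ) * Real.exp (-(1/2) * x ^ (1:ℝ)))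
      (Set.Ioi 0) :=
    integrableOn_rpow_mul_exp_neg_mul_rpow (by norm_num) (by norm_num) (by norm_num)
  have h2 : IntegrableOn (fun x : ℝ => x ^ ((m:ℝ) + 1/2) * Real.exp (-(1/2) * x ^ (1:ℝ)))
      (Set.Ioi 0) :=
    integrableOn_rpow_mul_exp_neg_mul_rpow (by have := Nat.cast_nonneg (α := ℝ) m; linarith) (by norm_num) (by norm_num)
  simp only [Real.rpow_one] at h1 h2
  have hdom : IntegrableOn (fun x : ℝ =>
      (2:ℝ) ^ (m+1) * (x ^ (-(1/2) : ℝ) * Real.exp (-(1/2) * x)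
        + x ^ ((m:ℝ) + 1/2) * Real.exp (-(1/2) * x))) (Set.Ioi 0) :=
    (h1.add h2).const_mul _
  refine Integrable.mono' hdom ?_ ?_
  · apply Measurable.aestronglyMeasurable
    unfold Gker
    fun_prop
  · filter_upwards [ae_restrict_mem measurableSet_Ioi] with u hu
    have hu0 : (0:ℝ) < u := hu
    have hsq : 0 < Real.sqrt u := Real.sqrt_pos.mpr hu0
    rw [Real.norm_of_nonneg (Gker_nonneg m hu0)]
    unfold Gker
    have hpow : (1 + u) ^ (m + 1) ≤ 2 ^ (m+1) * (1 + u ^ (m+1)) := by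
      rcases le_total u 1 with h | h
      · have h3 : (1 + u) ^ (m+1) ≤ 2 ^ (m+1) := by
          apply pow_le_pow_left₀ (by linarith) (by linarith)
        have hun : (0:ℝ) ≤ u ^ (m+1) := by positivity
        nlinarith [pow_pos (show (0:ℝ) < 2 by norm_num) (m+1)]
      · have h3 : (1 + u) ^ (m+1) ≤ (2 * u) ^ (m+1) := by
          apply pow_le_pow_left₀ (by linarith) (by linarith)
        rw [mul_pow] at h3
        have hun : (0:ℝ) < 2 ^ (m+1) := by positivity
        nlinarith
    have hr1 : u ^ (-(1/2) : ℝ) = (Real.sqrt u)⁻¹ := by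
      rw [Real.rpow_neg hu0.le, Real.sqrt_eq_rpow]
    have hr2 : u ^ ((m:ℝ) + 1/2) = u ^ m * Real.sqrt u := by
      rw [Real.rpow_add hu0, Real.rpow_natCast, Real.sqrt_eq_rpow]
    rw [hr1, hr2]
    have hue : u = Real.sqrt u * Real.sqrt u := (Real.mul_self_sqrt hu0.le).symm
    have hexp : (0:ℝ) < Real.exp (-(1/2) * u) := Real.exp_pos _
    calc (1 + u) ^ (m+1) * Real.exp (-(1/2) * u) / Real.sqrt u
        ≤ (2 ^ (m+1) * (1 + u ^ (m+1))) * Real.exp (-(1/2) * u) / Real.sqrt u := by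
          gcongr
      _ = 2 ^ (m+1) * ((Real.sqrt u)⁻¹ * Real.exp (-(1/2) * u)
            + u ^ m * Real.sqrt u * Real.exp (-(1/2) * u)) := by
          rw [pow_succ u m]
          field_simp
          rw [show u ^ m * u = u ^ m * (Real.sqrt u * Real.sqrt u) from by rw [← hue]]
          ring

theorem kernel_integral_estimate (m : ℕ) (hm : 1 ≤ m) :
    ∃ C : ℝ, 0 < C ∧ ∀ t r : ℝ, 0 < t → 0 ≤ r →
      (∫ s in Set.Ioi r,
          ((1 + s) / t + ((1 + s) / t) ^ m) * Real.exp (-((m : ℝ) - 1 / 2) * s) *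
            (Real.sqrt (1 + s - r) / Real.sqrt (s - r)))
        ≤ C * ((1 + r) / t + ((1 + r) / t) ^ m) * Real.exp (-((m : ℝ) - 1 / 2) * r) := by
  have hGint := Gker_integrable m
  set I := ∫ u in Set.Ioi (0:ℝ), Gker m u with hIdef
  have hInn : 0 ≤ I :=
    setIntegral_nonneg measurableSet_Ioi (fun u hu => Gker_nonneg m hu)
  refine ⟨I + 1, by linarith, fun t r ht hr => ?_⟩
  have hP0 : 0 ≤ (1 + r) / t := div_nonneg (by linarith) ht.le
  -- translation facts
  have hemb : MeasurableEmbedding (fun x : ℝ => x + r) :=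
    (MeasurableEquiv.addRight r).measurableEmbedding
  have hmp : MeasurePreserving (fun x : ℝ => x + r) volume volume :=
    measurePreserving_add_right volume r
  have himg : (fun x : ℝ => x + r) '' Set.Ioi 0 = Set.Ioi r := by
    rw [Set.image_add_const_Ioi, zero_add]
  have htrans : (∫ s in Set.Ioi r, Gker m (s - r)) = I := by
    rw [← himg, hmp.setIntegral_image_emb hemb]
    simp [hIdef]
  have htransInt : IntegrableOn (fun s => Gker m (s - r)) (Set.Ioi r) := by
    have hmap : volume.restrict (Set.Ioi r)
        = Measure.map (fun x : ℝ => x + r) (volume.restrict (Set.Ioi 0)) := by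
      conv_lhs => rw [← hmp.map_eq]
      rw [Measure.restrict_map hemb.measurable measurableSet_Ioi,
        Set.preimage_add_const_Ioi, sub_self]
    unfold IntegrableOn
    rw [hmap, hemb.integrable_map_iff]
    have : ((fun s => Gker m (s - r)) ∘ fun x : ℝ => x + r) = Gker m := by
      funext x; simp
    rw [this]
    exact hGint
  set A := ((1 + r) / t + ((1 + r) / t) ^ m) * Real.exp (-((m : ℝ) - 1 / 2) * r) with hA
  have hA0 : 0 ≤ A := mul_nonneg (add_nonneg hP0 (pow_nonneg hP0 m)) (Real.exp_pos _).le
  have hmono : (∫ s in Set.Ioi r,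
        ((1 + s) / t + ((1 + s) / t) ^ m) * Real.exp (-((m : ℝ) - 1 / 2) * s) *
          (Real.sqrt (1 + s - r) / Real.sqrt (s - r)))
      ≤ ∫ s in Set.Ioi r, A * Gker m (s - r) := by
    apply integral_mono_of_nonneg
    · filter_upwards [ae_restrict_mem measurableSet_Ioi] with s hs
      have hs0 : (0:ℝ) ≤ s := le_trans hr (le_of_lt hs)
      have hPs : 0 ≤ (1 + s) / t := div_nonneg (by linarith) ht.le
      have : 0 ≤ (1 + s) / t + ((1 + s) / t) ^ m :=
        add_nonneg hPs (pow_nonneg hPs m)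
      positivity
    · exact htransInt.const_mul A
    · filter_upwards [ae_restrict_mem measurableSet_Ioi] with s hs
      have hu : 0 < s - r := sub_pos.mpr hs
      have hs0 : (0:ℝ) ≤ s := le_trans hr (le_of_lt hs)
      have hsq : 0 < Real.sqrt (s - r) := Real.sqrt_pos.mpr hu
      have hm1 : (1:ℝ) ≤ 1 + (s - r) := by linarith
      have hmR : (1:ℝ) ≤ (m:ℝ) := by exact_mod_cast hm
      -- bound on the polynomial part
      have ha : (1 + s) / t ≤ (1 + r) / t * (1 + (s - r)) := by
        rw [div_mul_eq_mul_div]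
        apply div_le_div_of_nonneg_right ?_ ht.le
        nlinarith [mul_nonneg hr hu.le]
      have hc : (1 + (s - r)) ≤ (1 + (s - r)) ^ m :=
        le_self_pow₀ hm1 (by omega)
      have hP : (1 + s) / t + ((1 + s) / t) ^ m
          ≤ ((1 + r) / t + ((1 + r) / t) ^ m) * (1 + (s - r)) ^ m := by
        have h1 : (1 + s) / t ≤ (1 + r) / t * (1 + (s - r)) ^ m :=
          ha.trans (mul_le_mul_of_nonneg_left hc hP0)
        have h2 : ((1 + s) / t) ^ m ≤ ((1 + r) / t) ^ m * (1 + (s - r)) ^ m := by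
          rw [← mul_pow]
          exact pow_le_pow_left₀ (div_nonneg (by linarith) ht.le) ha m
        rw [add_mul]
        exact add_le_add h1 h2
      have hE : Real.exp (-((m:ℝ) - 1/2) * s)
          = Real.exp (-((m:ℝ) - 1/2) * r) * Real.exp (-((m:ℝ) - 1/2) * (s - r)) := by
        rw [← Real.exp_add]; ring_nf
      have hE2 : Real.exp (-((m:ℝ) - 1/2) * (s - r)) ≤ Real.exp (-(1/2) * (s - r)) := by
        apply Real.exp_le_exp.mpr
        nlinarith
      have hQ : Real.sqrt (1 + s - r) / Real.sqrt (s - r)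
          ≤ (1 + (s - r)) / Real.sqrt (s - r) := by
        apply div_le_div_of_nonneg_right ?_ hsq.le
        rw [show (1 + s - r) = 1 + (s - r) by ring]
        exact Real.sqrt_le_iff.mpr ⟨by linarith, by nlinarith⟩
      have hre : A * Gker m (s - r)
          = (((1 + r) / t + ((1 + r) / t) ^ m) * (1 + (s - r)) ^ m)
            * (Real.exp (-((m:ℝ) - 1/2) * r) * Real.exp (-(1/2) * (s - r)))
            * ((1 + (s - r)) / Real.sqrt (s - r)) := by
        rw [hA]; unfold Gker; ring
      rw [hre, hE]
      have hP'0 : 0 ≤ ((1 + r) / t + ((1 + r) / t) ^ m) * (1 + (s - r)) ^ m :=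
        mul_nonneg (add_nonneg hP0 (pow_nonneg hP0 m)) (pow_nonneg (by linarith) m)
      apply mul_le_mul ?_ hQ (div_nonneg (Real.sqrt_nonneg _) (Real.sqrt_nonneg _))
        (mul_nonneg hP'0 (by positivity))
      exact mul_le_mul hP (mul_le_mul_of_nonneg_left hE2 (Real.exp_pos _).le)
        (by positivity) hP'0
  calc (∫ s in Set.Ioi r,
        ((1 + s) / t + ((1 + s) / t) ^ m) * Real.exp (-((m : ℝ) - 1 / 2) * s) *
          (Real.sqrt (1 + s - r) / Real.sqrt (s - r)))
      ≤ ∫ s in Set.Ioi r, A * Gker m (s - r) := hmono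
    _ = A * I := by rw [integral_const_mul, htrans]
    _ ≤ A * (I + 1) := by nlinarith
    _ = (I + 1) * ((1 + r) / t + ((1 + r) / t) ^ m) * Real.exp (-((m : ℝ) - 1 / 2) * r) := by
        rw [hA]; ring
end

section
/- Let n ≥ 2, q > 2, and suppose f: H^n → [0,∞) is a radial decreasing function satisfying f(r) ≤ A·(1+r)^{(n−1)/2} e^{−((n−1)/2) r} for all r ≥ 0. Then f ∈ L^{q,1}(H^n) with ‖f‖_{L^{q,1}} ≤ C_q A, where L^{q,1} is the Lorentz space. In particular, ∫_0^1 f(r)^α r^{αn/q − 1} dr and ∫_1^∞ f(r)^α e^{(α(n−1)/q) r} dr are finite for α = 1 whenever q > 2. -/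
open MeasureTheory

/-- The volume of a ball of radius `r` in `H^n` (up to the fixed constant `cn`). -/
noncomputable def ballVol (n : ℕ) (cn : ℝ) (r : ℝ) : ℝ :=
  cn * ∫ s in (0:ℝ)..r, (Real.sinh s) ^ (n - 1)

/-!
Write `t = ballVol n cn r`, so that the Lorentz norm is `∫ f(r) w(r) dr` with
`w = t ^ (1/q) t' / t`. Near `0` the ball volume is comparable to `r ^ n`, so
`w(r) ≲ r ^ (n/q - 1)`, which is integrable, and `f ≤ f 0 ≤ A` there. For `r ≥ 1` the ball
volume is comparable to `e^{(n-1) r}`, so `w(r) ≲ e^{(n-1) r / q}`, while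
`f(r) ≲ A (1 + r)^{(n-1)/2} e^{-(n-1) r / 2}`: the product is integrable exactly because `q > 2`.
-/

open Real Set

lemma sinh_le_mul_exp (r : ℝ) : sinh r ≤ r * exp r := by
  have h := add_one_le_exp (-(2 * r))
  have hsplit : exp (-r) = exp r * exp (-(2 * r)) := by rw [← exp_add]; ring_nf
  rw [sinh_eq, hsplit]
  nlinarith [exp_pos r]

lemma sinh_le_exp (r : ℝ) : sinh r ≤ exp r := by
  rw [sinh_eq]; linarith [exp_pos (-r), exp_pos r]

/-- Equivalently, `sinh s / exp s` is monotone. -/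
lemma sinh_mul_exp_sub_le {s t : ℝ} (hts : t ≤ s) : sinh t * exp (s - t) ≤ sinh s := by
  have h : exp (-s) ≤ exp (s - 2 * t) := exp_le_exp.2 (by linarith)
  have e1 : exp t * exp (s - t) = exp s := by rw [← exp_add]; ring_nf
  have e2 : exp (-t) * exp (s - t) = exp (s - 2 * t) := by rw [← exp_add]; ring_nf
  rw [sinh_eq, sinh_eq, div_mul_eq_mul_div, sub_mul, e1, e2]
  linarith

lemma integrableOn_one_add_rpow_mul_exp_neg {p b : ℝ} (hp : 0 ≤ p) (hb : 0 < b) :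
    IntegrableOn (fun r => (1 + r) ^ p * exp (-b * r)) (Ioi 1) := by
  have hmaj : IntegrableOn (fun r : ℝ => 2 ^ p * (r ^ p * exp (-b * r ^ (1 : ℝ)))) (Ioi 1) :=
    ((integrableOn_rpow_mul_exp_neg_mul_rpow (by linarith) one_pos hb).mono_set
      (Ioi_subset_Ioi zero_le_one)).const_mul _
  refine hmaj.mono' (by fun_prop) ?_
  filter_upwards [self_mem_ae_restrict measurableSet_Ioi] with r (hr : 1 < r)
  rw [Real.norm_of_nonneg (by positivity), rpow_one, ← mul_assoc,
    ← mul_rpow zero_le_two (by linarith)]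
  gcongr
  linarith

section RadialFunction

variable {f : ℝ → ℝ}

lemma integrableOn_Ioo_mul_rpow_of_antitoneOn (hf : AntitoneOn f (Ici 0))
    (hf0 : ∀ r, 0 ≤ r → 0 ≤ f r) {s : ℝ} (hs : -1 < s) :
    IntegrableOn (fun r => f r * r ^ s) (Ioo 0 1) := by
  have hpow := (intervalIntegral.integrableOn_Ioo_rpow_iff one_pos).2 hs
  refine (hpow.const_mul (f 0)).mono' ?_ ?_
  · exact (aemeasurable_restrict_of_antitoneOn measurableSet_Ioo
      (hf.mono fun r hr => hr.1.le)).aestronglyMeasurable.mul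
      (measurable_id.pow_const s).aestronglyMeasurable
  · filter_upwards [self_mem_ae_restrict measurableSet_Ioo] with r hr
    rw [norm_of_nonneg (mul_nonneg (hf0 r hr.1.le) (rpow_nonneg hr.1.le _))]
    exact mul_le_mul_of_nonneg_right (hf self_mem_Ici hr.1.le hr.1.le) (rpow_nonneg hr.1.le _)

variable {A p : ℝ}

lemma mul_exp_le_of_le_decay {a r : ℝ} (h : f r ≤ A * (1 + r) ^ p * exp (-p * r)) :
    f r * exp (a * r) ≤ A * ((1 + r) ^ p * exp (-(p - a) * r)) :=
  calc f r * exp (a * r) ≤ A * (1 + r) ^ p * exp (-p * r) * exp (a * r) :=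
        mul_le_mul_of_nonneg_right h (exp_pos _).le
    _ = A * ((1 + r) ^ p * exp (-(p - a) * r)) := by
        rw [mul_assoc, ← exp_add]; ring_nf

lemma integrableOn_Ioi_mul_exp_of_decay (hf : AntitoneOn f (Ici 0))
    (hf0 : ∀ r, 0 ≤ r → 0 ≤ f r) {a : ℝ} (hp : 0 ≤ p) (hap : a < p)
    (hdecay : ∀ r, 0 ≤ r → f r ≤ A * (1 + r) ^ p * exp (-p * r)) :
    IntegrableOn (fun r => f r * exp (a * r)) (Ioi 1) := by
  refine ((integrableOn_one_add_rpow_mul_exp_neg hp (sub_pos.2 hap)).const_mul A).mono' ?_ ?_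
  · exact (aemeasurable_restrict_of_antitoneOn measurableSet_Ioi
      (hf.mono fun r (hr : 1 < r) => zero_le_one.trans hr.le)).aestronglyMeasurable.mul
      (by fun_prop)
  · filter_upwards [self_mem_ae_restrict measurableSet_Ioi] with r (hr : 1 < r)
    have hr0 : 0 ≤ r := zero_le_one.trans hr.le
    rw [norm_of_nonneg (mul_nonneg (hf0 r hr0) (exp_pos _).le)]
    exact mul_exp_le_of_le_decay (hdecay r hr0)

end RadialFunction

section BallVolume

variable {n : ℕ} {cn : ℝ}

lemma ballVol_pos (hcn : 0 < cn) {r : ℝ} (hr : 0 < r) : 0 < ballVol n cn r :=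
  mul_pos hcn <| intervalIntegral.intervalIntegral_pos_of_pos_on
    ((continuous_sinh.pow _).intervalIntegrable _ _)
    (fun _ hs => pow_pos (sinh_pos_iff.2 hs.1) _) hr

lemma div_mul_pow_le_ballVol (hn : 1 ≤ n) (hcn : 0 ≤ cn) {r : ℝ} (hr : 0 ≤ r) :
    cn / n * r ^ n ≤ ballVol n cn r := by
  have hpow : ∫ s in (0:ℝ)..r, s ^ (n - 1) = r ^ n / n := by
    rw [integral_pow, Nat.sub_add_cancel hn, zero_pow (by omega), Nat.cast_sub hn]
    simp
  rw [div_mul_comm, ← hpow, mul_comm]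
  refine mul_le_mul_of_nonneg_left ?_ hcn
  exact intervalIntegral.integral_mono_on hr (intervalIntegral.intervalIntegrable_pow _)
    ((continuous_sinh.pow _).intervalIntegrable _ _)
    fun s hs => pow_le_pow_left₀ hs.1 (self_le_sinh_iff.2 hs.1) _

lemma mul_exp_pow_le_ballVol (hcn : 0 ≤ cn) {r : ℝ} (hr : 1 ≤ r) :
    cn / 2 * (sinh (1 / 2) * exp (-1) * exp r) ^ (n - 1) ≤ ballVol n cn r := by
  have hcont : Continuous fun s => sinh s ^ (n - 1) := continuous_sinh.pow _
  have hlow : ∀ s ∈ Icc (r - 1 / 2) r, sinh (1 / 2) * exp (-1) * exp r ≤ sinh s := by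
    intro s hs
    calc sinh (1 / 2) * exp (-1) * exp r ≤ sinh (1 / 2) * exp (s - 1 / 2) := by
          rw [mul_assoc, ← exp_add]
          gcongr
          linarith [hs.1]
      _ ≤ sinh s := sinh_mul_exp_sub_le (by linarith [hs.1])
  have hshort : (1 / 2) * (sinh (1 / 2) * exp (-1) * exp r) ^ (n - 1)
      ≤ ∫ s in (r - 1 / 2)..r, sinh s ^ (n - 1) := by
    have := intervalIntegral.integral_mono_on (μ := volume) (by linarith)
      intervalIntegrable_const (hcont.intervalIntegrable _ _) fun s hs =>
        pow_le_pow_left₀ (by positivity) (hlow s hs) (n - 1)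
    simpa using this
  have hlong : ∫ s in (r - 1 / 2)..r, sinh s ^ (n - 1) ≤ ∫ s in (0:ℝ)..r, sinh s ^ (n - 1) :=
    intervalIntegral.integral_mono_interval (by linarith) (by linarith) le_rfl
      ((ae_restrict_iff' measurableSet_Ioc).2 <| .of_forall fun s hs =>
        pow_nonneg (sinh_nonneg_iff.2 hs.1.le) _)
      (hcont.intervalIntegrable _ _)
  unfold ballVol
  nlinarith

/-- The Lorentz measure `t ^ (1 / q) dt / t`, pulled back along `t = ballVol n cn r`. -/
noncomputable def lorentzWeight (n : ℕ) (cn q r : ℝ) : ℝ :=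
  ballVol n cn r ^ (1 / q - 1) * (cn * sinh r ^ (n - 1))

lemma rpow_mul_div_ballVol_eq (hcn : 0 < cn) (q y : ℝ) {r : ℝ} (hr : 0 < r) :
    ballVol n cn r ^ (1 / q) * y * (cn * sinh r ^ (n - 1)) / ballVol n cn r
      = y * lorentzWeight n cn q r := by
  rw [lorentzWeight, rpow_sub_one (ballVol_pos hcn hr).ne']
  ring

lemma lorentzWeight_nonneg (hcn : 0 < cn) (q : ℝ) {r : ℝ} (hr : 0 < r) :
    0 ≤ lorentzWeight n cn q r :=
  mul_nonneg (rpow_nonneg (ballVol_pos hcn hr).le _)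
    (mul_nonneg hcn.le (pow_nonneg (sinh_pos_iff.2 hr).le _))

lemma exists_lorentzWeight_le_rpow (hn : 1 ≤ n) (hcn : 0 < cn) {q : ℝ} (hq : 1 ≤ q) :
    ∃ K, 0 ≤ K ∧ ∀ r ∈ Ioc (0:ℝ) 1, lorentzWeight n cn q r ≤ K * r ^ ((n:ℝ) / q - 1) := by
  have hθ : 1 / q - 1 ≤ 0 := sub_nonpos.2 ((div_le_one (by linarith)).2 hq)
  refine ⟨(cn / n) ^ (1 / q - 1) * (cn * exp 1 ^ (n - 1)), by positivity, fun r hr => ?_⟩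
  have hr0 := hr.1
  have hvol : ballVol n cn r ^ (1 / q - 1) ≤ (cn / n * r ^ n) ^ (1 / q - 1) :=
    rpow_le_rpow_of_nonpos (by positivity) (div_mul_pow_le_ballVol hn hcn.le hr0.le) hθ
  have hsinh : sinh r ≤ exp 1 * r := by
    nlinarith [sinh_le_mul_exp r, mul_le_mul_of_nonneg_left (exp_le_exp.2 hr.2) hr0.le]
  have hexp : (r ^ n) ^ (1 / q - 1) * r ^ (n - 1) = r ^ ((n:ℝ) / q - 1) := by
    rw [← rpow_natCast, ← rpow_natCast, ← rpow_mul hr0.le, ← rpow_add hr0, Nat.cast_sub hn]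
    congr 1
    field_simp
    ring
  calc lorentzWeight n cn q r
      ≤ (cn / n * r ^ n) ^ (1 / q - 1) * (cn * (exp 1 * r) ^ (n - 1)) := by
        refine mul_le_mul hvol ?_ (by positivity) (by positivity)
        gcongr
    _ = (cn / n) ^ (1 / q - 1) * (cn * exp 1 ^ (n - 1)) * r ^ ((n:ℝ) / q - 1) := by
        rw [mul_rpow (by positivity) (by positivity), mul_pow, ← hexp]
        ring

lemma exists_lorentzWeight_le_exp (hn : 1 ≤ n) (hcn : 0 < cn) {q : ℝ} (hq : 1 ≤ q) :
    ∃ K, 0 ≤ K ∧ ∀ r, 1 ≤ r → lorentzWeight n cn q r ≤ K * exp (((n:ℝ) - 1) / q * r) := by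
  have hθ : 1 / q - 1 ≤ 0 := sub_nonpos.2 ((div_le_one (by linarith)).2 hq)
  set c := sinh (1 / 2) * exp (-1)
  have hc : 0 < c := mul_pos (sinh_pos_iff.2 one_half_pos) (exp_pos _)
  refine ⟨(cn / 2 * c ^ (n - 1)) ^ (1 / q - 1) * cn, by positivity, fun r hr => ?_⟩
  have hlow : cn / 2 * c ^ (n - 1) * exp r ^ (n - 1) ≤ ballVol n cn r := by
    have := mul_exp_pow_le_ballVol (n := n) hcn.le hr
    rwa [mul_pow, ← mul_assoc] at this
  have hvol : ballVol n cn r ^ (1 / q - 1)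
      ≤ (cn / 2 * c ^ (n - 1) * exp r ^ (n - 1)) ^ (1 / q - 1) :=
    rpow_le_rpow_of_nonpos (by positivity) hlow hθ
  have hE : exp r ^ (n - 1) = exp (((n:ℝ) - 1) * r) := by
    rw [← exp_nat_mul, Nat.cast_sub hn, Nat.cast_one]
  calc lorentzWeight n cn q r
      ≤ (cn / 2 * c ^ (n - 1) * exp r ^ (n - 1)) ^ (1 / q - 1) * (cn * exp r ^ (n - 1)) := by
        refine mul_le_mul hvol ?_ (by positivity) (by positivity)
        gcongr
        exact sinh_le_exp r
    _ = (cn / 2 * c ^ (n - 1)) ^ (1 / q - 1) * cn * exp (((n:ℝ) - 1) / q * r) := by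
        have hexp : exp (((n:ℝ) - 1) * r) ^ (1 / q - 1) * exp (((n:ℝ) - 1) * r)
            = exp (((n:ℝ) - 1) / q * r) := by
          rw [← exp_mul, ← exp_add]
          congr 1
          field_simp
          ring
        rw [mul_rpow (by positivity) (by positivity), hE, ← hexp]
        ring

lemma exists_integrableOn_lorentzWeight_majorant (hn : 1 ≤ n) (hcn : 0 < cn) {q p : ℝ}
    (hq : 1 ≤ q) (hp : 0 ≤ p) (hpq : ((n:ℝ) - 1) / q < p) :
    ∃ h : ℝ → ℝ, IntegrableOn h (Ioi 0) ∧ ∀ (f : ℝ → ℝ) (A : ℝ),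
      (∀ r, 0 ≤ r → 0 ≤ f r) → AntitoneOn f (Ici 0) →
      (∀ r, 0 ≤ r → f r ≤ A * (1 + r) ^ p * exp (-p * r)) →
      ∀ r ∈ Ioi 0, f r * lorentzWeight n cn q r ≤ A * h r := by
  obtain ⟨K₀, hK₀, hnear⟩ := exists_lorentzWeight_le_rpow hn hcn hq
  obtain ⟨K₁, hK₁, hfar⟩ := exists_lorentzWeight_le_exp hn hcn hq
  have hs : -1 < (n:ℝ) / q - 1 := by
    have : (0:ℝ) < n / q := div_pos (by exact_mod_cast hn) (by linarith)
    linarith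
  refine ⟨fun r => if r ≤ 1 then K₀ * r ^ ((n:ℝ) / q - 1)
    else K₁ * ((1 + r) ^ p * exp (-(p - ((n:ℝ) - 1) / q) * r)), ?_, ?_⟩
  · rw [← Ioc_union_Ioi_eq_Ioi zero_le_one]
    refine IntegrableOn.union ?_ ?_
    · exact IntegrableOn.congr_fun (((integrableOn_Ioc_iff_integrableOn_Ioo (by simp)).2
        ((intervalIntegral.integrableOn_Ioo_rpow_iff one_pos).2 hs)).const_mul K₀)
        (fun r hr => (if_pos hr.2).symm) measurableSet_Ioc
    · exact IntegrableOn.congr_fun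
        ((integrableOn_one_add_rpow_mul_exp_neg hp (sub_pos.2 hpq)).const_mul K₁)
        (fun r (hr : 1 < r) => (if_neg (not_le.2 hr)).symm) measurableSet_Ioi
  · rintro f A hf0 hf hdecay r (hr : 0 < r)
    have hA : f 0 ≤ A := by simpa using hdecay 0 le_rfl
    dsimp only
    split_ifs with hr1
    · calc f r * lorentzWeight n cn q r ≤ f 0 * (K₀ * r ^ ((n:ℝ) / q - 1)) :=
            mul_le_mul (hf self_mem_Ici hr.le hr.le) (hnear r ⟨hr, hr1⟩)
              (lorentzWeight_nonneg hcn q hr) (hf0 0 le_rfl)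
        _ ≤ A * (K₀ * r ^ ((n:ℝ) / q - 1)) :=
            mul_le_mul_of_nonneg_right hA (by positivity)
    · calc f r * lorentzWeight n cn q r ≤ f r * (K₁ * exp (((n:ℝ) - 1) / q * r)) :=
            mul_le_mul_of_nonneg_left (hfar r (le_of_not_ge hr1)) (hf0 r hr.le)
        _ = K₁ * (f r * exp (((n:ℝ) - 1) / q * r)) := by ring
        _ ≤ K₁ * (A * ((1 + r) ^ p * exp (-(p - ((n:ℝ) - 1) / q) * r))) :=
            mul_le_mul_of_nonneg_left (mul_exp_le_of_le_decay (hdecay r hr.le)) hK₁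
        _ = A * (K₁ * ((1 + r) ^ p * exp (-(p - ((n:ℝ) - 1) / q) * r))) := by ring

end BallVolume

theorem radial_lorentz_estimate (n : ℕ) (hn : 2 ≤ n) (q : ℝ) (hq : 2 < q)
    (cn : ℝ) (hcn : 0 < cn) :
    ∃ C : ℝ, 0 < C ∧ ∀ (f : ℝ → ℝ) (A : ℝ),
      (∀ r : ℝ, 0 ≤ r → 0 ≤ f r) →
      AntitoneOn f (Set.Ici 0) →
      (∀ r : ℝ, 0 ≤ r →
        f r ≤ A * (1 + r) ^ (((n : ℝ) - 1) / 2) * Real.exp (-(((n : ℝ) - 1) / 2) * r)) →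
      (∫ r in Set.Ioi (0:ℝ),
          (ballVol n cn r) ^ (1 / q) * f r *
            (cn * (Real.sinh r) ^ (n - 1)) / ballVol n cn r) ≤ C * A ∧
      IntegrableOn (fun r => f r * r ^ ((n : ℝ) / q - 1)) (Set.Ioo (0:ℝ) 1) ∧
      IntegrableOn (fun r => f r * Real.exp ((((n : ℝ) - 1) / q) * r)) (Set.Ioi (1:ℝ)) := by
  have hn1 : 1 ≤ n := by omega
  have hn2 : (2:ℝ) ≤ n := by exact_mod_cast hn
  have hp : 0 ≤ ((n:ℝ) - 1) / 2 := by linarith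
  have hpq : ((n:ℝ) - 1) / q < ((n:ℝ) - 1) / 2 := div_lt_div_of_pos_left (by linarith) two_pos hq
  obtain ⟨h, hh, hbound⟩ :=
    exists_integrableOn_lorentzWeight_majorant hn1 hcn (by linarith) hp hpq
  refine ⟨max (∫ r in Ioi 0, h r) 1, by positivity, fun f A hf0 hf hdecay => ⟨?_, ?_, ?_⟩⟩
  · have hA : 0 ≤ A := (hf0 0 le_rfl).trans (by simpa using hdecay 0 le_rfl)
    calc (∫ r in Ioi 0,
          ballVol n cn r ^ (1 / q) * f r * (cn * sinh r ^ (n - 1)) / ballVol n cn r)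
        = ∫ r in Ioi 0, f r * lorentzWeight n cn q r :=
          setIntegral_congr_fun measurableSet_Ioi fun r hr =>
            rpow_mul_div_ballVol_eq hcn q (f r) hr
      _ ≤ ∫ r in Ioi 0, A * h r := by
          refine integral_mono_of_nonneg ?_ (hh.const_mul A) ?_ <;>
            filter_upwards [self_mem_ae_restrict measurableSet_Ioi] with r (hr : 0 < r)
          · exact mul_nonneg (hf0 r hr.le) (lorentzWeight_nonneg hcn q hr)
          · exact hbound f A hf0 hf hdecay r hr
      _ = A * ∫ r in Ioi 0, h r := integral_const_mul A h
      _ ≤ max (∫ r in Ioi 0, h r) 1 * A := by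
          rw [mul_comm]; exact mul_le_mul_of_nonneg_right (le_max_left _ _) hA
  · have : (0:ℝ) < n / q := by positivity
    exact integrableOn_Ioo_mul_rpow_of_antitoneOn hf hf0 (by linarith)
  · exact integrableOn_Ioi_mul_exp_of_decay hf hf0 hp hpq hdecay
end
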